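/- arXiv:1909.10219 — 3 statements merged into one kernel-verified Lean document; each statement's English description precedes it below -/
import Mathlib

section
/- Let φ ≥ 1 and n ≥ 2φ−1, let c_0, …, c_n and d_0, …, d_n be control points in ℝ^d and π ∈ ℝ^d a point such that c_{n−φ+1} = ⋯ = c_n = π and d_0 = ⋯ = d_{φ−1} = π. Define the piecewise curve P on [0,2] by P(t) = Σ_{k=0}^{n} c_k B_{k,n}(t) for t ∈ [0,1] and P(t) = Σ_{k=0}^{n} d_k B_{k,n}(t−1) for t ∈ [1,2]. Then P is well defined (both formulas give π at t = 1) and P is continuously differentiable up to order φ−1 on (0,2); in particular, for every 1 ≤ r ≤ φ−1 the r-th derivatives of both pieces at the junction t = 1 agree (both equal 0). -/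
/-!
By `∑ₖ B_{k,n} = 1`, a piece differs from `π` by `∑ₖ B_{k,n}(t) (c_k - π)`, and every surviving
term carries the factor `t^φ` (second piece) resp. `(1 - t)^φ` (first piece, by the symmetry
`B_{k,n}(1 - t) = B_{n-k,n}(t)`). So near the junction the pieces are `π + (t - 1)^φ f(t)` and
`π + (t - 1)^φ g(t)` with `f`, `g` smooth, which makes their derivatives of orders `1, …, φ - 1`
vanish there. The glued curve is `π + (t - 1)^φ g(t) + min(t - 1, 0)^φ (f(t) - g(t))`, and
`x ↦ min(x, 0)^φ` is of class `C^{φ-1}`.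
-/

/-- The Bernstein basis polynomial `B_{k,n}(t) = C(n,k) t^k (1-t)^(n-k)`. -/
noncomputable def bernsteinBasis (n k : ℕ) (t : ℝ) : ℝ :=
  (n.choose k : ℝ) * t ^ k * (1 - t) ^ (n - k)

open Finset Topology
open scoped ContDiff

section Calculus

variable {E : Type*} [NormedAddCommGroup E] [NormedSpace ℝ E]

theorem iteratedDeriv_sub_pow_smul_eq_zero {r φ : ℕ} (h : r < φ) (a : ℝ) {s : ℝ → E}
    (hs : ContDiff ℝ r s) : iteratedDeriv r (fun t => (t - a) ^ φ • s t) a = 0 := by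
  induction r generalizing φ s with
  | zero => simp [Nat.pos_iff_ne_zero.mp h]
  | succ r ih =>
    obtain ⟨ψ, rfl⟩ : ∃ ψ, φ = ψ + 1 := ⟨φ - 1, by omega⟩
    have hs' : ContDiff ℝ (r + 1) s := mod_cast hs
    have hderiv : deriv (fun t => (t - a) ^ (ψ + 1) • s t) =
        fun t => (t - a) ^ ψ • (((ψ : ℝ) + 1) • s t + (t - a) • deriv s t) := by
      funext t
      have hpow : HasDerivAt (fun t : ℝ => (t - a) ^ (ψ + 1)) ((ψ + 1 : ℝ) * (t - a) ^ ψ) t := by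
        simpa using ((hasDerivAt_id t).sub_const a).fun_pow (ψ + 1)
      rw [(hpow.fun_smul (hs'.differentiable (by simp) t).hasDerivAt).deriv, pow_succ]
      module
    rw [iteratedDeriv_succ', hderiv]
    refine ih (by omega) ((hs'.of_le (by simp)).const_smul _ |>.add ?_)
    exact (contDiff_id.sub contDiff_const).smul (contDiff_succ_iff_deriv.mp hs').2.2

theorem hasDerivAt_min_zero_pow (m : ℕ) (x : ℝ) :
    HasDerivAt (fun x : ℝ => min x 0 ^ (m + 2)) ((m + 2) * min x 0 ^ (m + 1)) x := by
  rcases lt_trichotomy x 0 with hx | rfl | hx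
  · have hpow : (fun y : ℝ => min y 0 ^ (m + 2)) =ᶠ[𝓝 x] fun y => y ^ (m + 2) := by
      filter_upwards [Iio_mem_nhds hx] with y hy
      rw [min_eq_left (Set.mem_Iio.mp hy).le]
    simpa [min_eq_left hx.le] using (hasDerivAt_pow (m + 2) x).congr_of_eventuallyEq hpow
  · rw [hasDerivAt_iff_isLittleO_nhds_zero]
    refine (Asymptotics.isBigO_of_le _ fun h => ?_).trans_isLittleO
      (Asymptotics.isLittleO_pow_id (n := m + 2) (by omega))
    simp only [zero_add, min_self, zero_pow (Nat.succ_ne_zero _), mul_zero, smul_zero, sub_zero,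
      norm_pow, Real.norm_eq_abs]
    exact pow_le_pow_left₀ (abs_nonneg _) (by rcases le_total h 0 with h | h <;> simp [h]) _
  · have hzero : (fun y : ℝ => min y 0 ^ (m + 2)) =ᶠ[𝓝 x] fun _ => 0 := by
      filter_upwards [Ioi_mem_nhds hx] with y hy
      simp [min_eq_right (Set.mem_Ioi.mp hy).le]
    simpa [min_eq_right hx.le] using (hasDerivAt_const x (0 : ℝ)).congr_of_eventuallyEq hzero

theorem contDiff_min_zero_pow (m : ℕ) : ContDiff ℝ m fun x : ℝ => min x 0 ^ (m + 1) := by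
  induction m with
  | zero => simpa using continuous_id.min continuous_const
  | succ m ih =>
    rw [Nat.cast_succ, contDiff_succ_iff_deriv]
    refine ⟨fun x => (hasDerivAt_min_zero_pow m x).differentiableAt, by simp, ?_⟩
    rw [funext fun x => (hasDerivAt_min_zero_pow m x).deriv]
    exact contDiff_const.mul ih

theorem contDiff_ite_add_sub_pow_smul {m : ℕ} (a : ℝ) (w : E) {f g : ℝ → E}
    (hf : ContDiff ℝ m f) (hg : ContDiff ℝ m g) :
    ContDiff ℝ m fun t => if t ≤ a then w + (t - a) ^ (m + 1) • f t
      else w + (t - a) ^ (m + 1) • g t := by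
  have hglue : (fun t => if t ≤ a then w + (t - a) ^ (m + 1) • f t
      else w + (t - a) ^ (m + 1) • g t) =
      fun t => w + (t - a) ^ (m + 1) • g t + min (t - a) 0 ^ (m + 1) • (f t - g t) := by
    funext t
    split_ifs with ht
    · rw [min_eq_left (sub_nonpos.mpr ht), smul_sub, add_add_sub_cancel]
    · rw [min_eq_right (sub_nonneg.mpr (not_le.mp ht).le), zero_pow (Nat.succ_ne_zero m),
        zero_smul, add_zero]
  have hsub : ContDiff ℝ m fun t : ℝ => t - a := contDiff_id.sub contDiff_const
  rw [hglue]
  exact (contDiff_const.add ((hsub.pow _).smul hg)).add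
    (((contDiff_min_zero_pow m).comp hsub).smul (hf.sub hg))

end Calculus

section Bernstein

theorem bernsteinBasis_eq_eval (n k : ℕ) (t : ℝ) :
    bernsteinBasis n k t = (bernsteinPolynomial ℝ n k).eval t := by
  simp [bernsteinBasis, bernsteinPolynomial]

theorem sum_bernsteinBasis (n : ℕ) (t : ℝ) : ∑ k ∈ range (n + 1), bernsteinBasis n k t = 1 := by
  simp only [bernsteinBasis_eq_eval, ← Polynomial.eval_finsetSum, bernsteinPolynomial.sum,
    Polynomial.eval_one]

theorem bernsteinBasis_one_sub {n k : ℕ} (h : k ≤ n) (t : ℝ) :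
    bernsteinBasis n k (1 - t) = bernsteinBasis n (n - k) t := by
  simp only [bernsteinBasis, Nat.choose_symm h, Nat.sub_sub_self h, sub_sub_cancel]
  ring

variable {E : Type*} [AddCommGroup E] [Module ℝ E]

noncomputable def bernsteinCurve (n : ℕ) (c : ℕ → E) (t : ℝ) : E :=
  ∑ k ∈ range (n + 1), bernsteinBasis n k t • c k

theorem bernsteinCurve_eq_add_sub (n : ℕ) (c : ℕ → E) (w : E) (t : ℝ) :
    bernsteinCurve n c t = w + bernsteinCurve n (fun k => c k - w) t := by
  simp only [bernsteinCurve, smul_sub, sum_sub_distrib, ← sum_smul, sum_bernsteinBasis, one_smul,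
    add_sub_cancel]

theorem bernsteinCurve_one_sub (n : ℕ) (c : ℕ → E) (t : ℝ) :
    bernsteinCurve n c (1 - t) = bernsteinCurve n (fun k => c (n - k)) t := by
  rw [bernsteinCurve, bernsteinCurve, ← sum_range_reflect]
  refine sum_congr rfl fun k hk => ?_
  have hk : k ≤ n := Nat.lt_succ_iff.mp (mem_range.mp hk)
  rw [Nat.add_sub_cancel, bernsteinBasis_one_sub (Nat.sub_le n k), Nat.sub_sub_self hk]

end Bernstein

section Junction

variable {E : Type*} [NormedAddCommGroup E] [NormedSpace ℝ E] {n φ : ℕ} {c : ℕ → E} {w : E}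

theorem exists_contDiff_bernsteinCurve_eq_add_pow_smul (hc : ∀ k < φ, c k = w) :
    ∃ s : ℝ → E, ContDiff ℝ ω s ∧ ∀ t, bernsteinCurve n c t = w + t ^ φ • s t := by
  -- for `k < φ` the truncated exponent `k - φ` is harmless, since then `c k - w = 0`
  refine ⟨fun t => ∑ k ∈ range (n + 1), ((n.choose k : ℝ) * t ^ (k - φ) * (1 - t) ^ (n - k)) •
    (c k - w), ContDiff.sum fun k _ => by fun_prop, fun t => ?_⟩
  rw [bernsteinCurve_eq_add_sub n c w, bernsteinCurve, smul_sum]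
  congr 1
  refine sum_congr rfl fun k _ => ?_
  rcases lt_or_ge k φ with hk | hk
  · simp [hc k hk]
  · rw [smul_smul, bernsteinBasis, ← pow_mul_pow_sub t hk]
    ring_nf

theorem exists_contDiff_bernsteinCurve_eq_add_sub_one_pow_smul (hφn : φ ≤ n)
    (hc : ∀ k, n - φ < k → k ≤ n → c k = w) :
    ∃ s : ℝ → E, ContDiff ℝ ω s ∧ ∀ t, bernsteinCurve n c t = w + (t - 1) ^ φ • s t := by
  obtain ⟨s, hs, hcs⟩ := exists_contDiff_bernsteinCurve_eq_add_pow_smul (n := n) (φ := φ)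
    (c := fun k => c (n - k)) (w := w) fun k hk => hc _ (by omega) (Nat.sub_le n k)
  refine ⟨fun t => (-1 : ℝ) ^ φ • s (1 - t), by fun_prop, fun t => ?_⟩
  rw [← sub_sub_cancel 1 t, bernsteinCurve_one_sub, hcs, smul_smul, ← mul_pow, sub_sub_cancel]
  congr 3
  ring

end Junction

/-- Two Bernstein segments whose last (resp. first) `φ` control points coincide at a common
waypoint `π` join into a piecewise curve that is well defined and continuously differentiable
up to order `φ - 1`; in particular all derivatives of orders `1, …, φ-1` of both pieces vanish
at the junction. -/
theorem piecewise_bernstein_smooth_junction (φ n : ℕ) (hφ : 1 ≤ φ) (hn : 2 * φ - 1 ≤ n)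
    (c d : ℕ → EuclideanSpace ℝ (Fin 3)) (wp : EuclideanSpace ℝ (Fin 3))
    (hc : ∀ k, n - φ + 1 ≤ k → k ≤ n → c k = wp)
    (hd : ∀ k ≤ φ - 1, d k = wp) :
    (∑ k ∈ Finset.range (n + 1), bernsteinBasis n k (1 : ℝ) • c k) = wp ∧
    (∑ k ∈ Finset.range (n + 1), bernsteinBasis n k (0 : ℝ) • d k) = wp ∧
    ContDiffOn ℝ (φ - 1 : ℕ)
      (fun t : ℝ => if t ≤ 1 then ∑ k ∈ Finset.range (n + 1), bernsteinBasis n k t • c k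
        else ∑ k ∈ Finset.range (n + 1), bernsteinBasis n k (t - 1) • d k)
      (Set.Ioo (0 : ℝ) 2) ∧
    ∀ r, 1 ≤ r → r ≤ φ - 1 →
      iteratedDeriv r (fun t : ℝ => ∑ k ∈ Finset.range (n + 1), bernsteinBasis n k t • c k)
        (1 : ℝ) = 0 ∧
      iteratedDeriv r (fun t : ℝ => ∑ k ∈ Finset.range (n + 1), bernsteinBasis n k t • d k)
        (0 : ℝ) = 0 := by
  obtain ⟨sc, hsc, hC⟩ := exists_contDiff_bernsteinCurve_eq_add_sub_one_pow_smul (c := c)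
    (w := wp) (by omega : φ ≤ n) fun k hk => hc k (by omega)
  obtain ⟨sd, hsd, hD⟩ := exists_contDiff_bernsteinCurve_eq_add_pow_smul (n := n) (φ := φ)
    (c := d) (w := wp) fun k hk => hd k (by omega)
  obtain ⟨m, rfl⟩ : ∃ m, φ = m + 1 := ⟨φ - 1, by omega⟩
  refine ⟨?_, ?_, ?_, fun r hr₁ hr₂ => ⟨?_, ?_⟩⟩
  · show bernsteinCurve n c 1 = wp
    simpa using hC 1
  · show bernsteinCurve n d 0 = wp
    simpa using hD 0
  · show ContDiffOn ℝ (m + 1 - 1 : ℕ)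
      (fun t => if t ≤ 1 then bernsteinCurve n c t else bernsteinCurve n d (t - 1)) _
    simp only [hC, hD, Nat.add_sub_cancel]
    exact (contDiff_ite_add_sub_pow_smul 1 wp (hsc.of_le le_top)
      ((hsd.comp (contDiff_id.sub contDiff_const)).of_le le_top)).contDiffOn
  · show iteratedDeriv r (bernsteinCurve n c) 1 = 0
    rw [funext hC, iteratedDeriv_const_add (by omega)]
    exact iteratedDeriv_sub_pow_smul_eq_zero (by omega) 1 (hsc.of_le le_top)
  · show iteratedDeriv r (bernsteinCurve n d) 0 = 0
    rw [funext hD, iteratedDeriv_const_add (by omega)]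
    simpa using iteratedDeriv_sub_pow_smul_eq_zero (by omega) 0 (hsd.of_le le_top)
end

section
/- Let c > 0, E = diag(1, 1, 1/c²) and E^{1/2} = diag(1, 1, 1/c) on ℝ^3, let r ≥ 0, and let a, b ∈ ℝ^3 be such that the segment [a, b] is disjoint from the ellipsoid C = {p : ⟨p, E p⟩ ≤ r²}. Let p̃ be a point of the transformed segment [E^{1/2}a, E^{1/2}b] minimizing the distance to the origin, and set ñ = p̃/‖p̃‖. Then the set R = {x ∈ ℝ^3 : ⟨E^{1/2}x, ñ⟩ − r > 0} is a convex set satisfying both: (i) R ∩ C = ∅, and (ii) [a, b] ⊆ R. (That is, R satisfies the definition of a relative safe flight corridor.) -/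
/-!
Under `E^{1/2}` the ellipsoid `C` becomes the closed ball of radius `r` and the segment `[a, b]`
becomes `[E^{1/2}a, E^{1/2}b]`, which avoids that ball. The closest point `p̃` of a convex set to
the origin satisfies `‖p̃‖² ≤ ⟪p̃, w⟫` for every `w` of the set, so the whole transformed segment
lies in the half-space `⟪·, ñ⟫ ≥ ‖p̃‖ > r`, while by Cauchy–Schwarz the ball lies in `⟪·, ñ⟫ ≤ r`.
Pulling this half-space back along `E^{1/2}` gives `R`.
-/

open scoped RealInnerProductSpace

section InnerProductSpace

variable {V : Type*} [NormedAddCommGroup V] [InnerProductSpace ℝ V]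

theorem norm_sq_le_inner_of_isMinOn_norm {K : Set V} {p w : V} (hK : Convex ℝ K) (hp : p ∈ K)
    (hmin : IsMinOn norm K p) (hw : w ∈ K) : ‖p‖ ^ 2 ≤ ⟪p, w⟫ := by
  have hinf : ‖0 - p‖ = ⨅ x : K, ‖0 - (x : V)‖ := by
    simp only [zero_sub, norm_neg]
    exact (hmin.iInf_eq hp).symm
  have h := (norm_eq_iInf_iff_real_inner_le_zero hK hp).mp hinf w hw
  rw [zero_sub, inner_neg_left, inner_sub_right, real_inner_self_eq_norm_sq] at h
  linarith

theorem norm_le_inner_inv_norm_smul_of_isMinOn_norm {K : Set V} {p w : V} (hK : Convex ℝ K)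
    (hp : p ∈ K) (hmin : IsMinOn norm K p) (hw : w ∈ K) : ‖p‖ ≤ ⟪w, ‖p‖⁻¹ • p⟫ := by
  rcases eq_or_ne p 0 with rfl | hp0
  · simp
  have hpos : 0 < ‖p‖ := norm_pos_iff.mpr hp0
  calc ‖p‖ = ‖p‖⁻¹ * ‖p‖ ^ 2 := by field_simp
    _ ≤ ‖p‖⁻¹ * ⟪p, w⟫ := by gcongr; exact norm_sq_le_inner_of_isMinOn_norm hK hp hmin hw
    _ = ⟪w, ‖p‖⁻¹ • p⟫ := by rw [real_inner_smul_right, real_inner_comm]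

theorem norm_inv_norm_smul_self_le_one (p : V) : ‖‖p‖⁻¹ • p‖ ≤ 1 := by
  rcases eq_or_ne p 0 with rfl | hp0
  · simp
  · simp [norm_smul, hp0]

theorem disjoint_setOf_inner_sub_pos_setOf_norm_le {u : V} (hu : ‖u‖ ≤ 1) (r : ℝ) :
    Disjoint {y : V | 0 < ⟪y, u⟫ - r} {y | ‖y‖ ≤ r} := by
  refine Set.disjoint_left.mpr fun y (hy : 0 < ⟪y, u⟫ - r) (hyr : ‖y‖ ≤ r) => ?_
  have : ⟪y, u⟫ ≤ ‖y‖ := calc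
    ⟪y, u⟫ ≤ ‖y‖ * ‖u‖ := real_inner_le_norm y u
    _ ≤ ‖y‖ := mul_le_of_le_one_right (norm_nonneg y) hu
  linarith

variable {F : Type*} [AddCommGroup F] [Module ℝ F]

theorem convex_setOf_inner_sub_pos (L : F →ₗ[ℝ] V) (u : V) (r : ℝ) :
    Convex ℝ {x | 0 < ⟪L x, u⟫ - r} := by
  simp_rw [sub_pos, real_inner_comm u]
  exact convex_halfSpace_gt ((innerₛₗ ℝ u).comp L).isLinear r

theorem segment_subset_setOf_inner_sub_pos_of_isMinOn_norm (L : F →ₗ[ℝ] V) {r : ℝ} {a b : F}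
    (hab : ∀ q ∈ segment ℝ a b, r < ‖L q‖) {p : V} (hp : p ∈ segment ℝ (L a) (L b))
    (hmin : IsMinOn norm (segment ℝ (L a) (L b)) p) :
    segment ℝ a b ⊆ {x | 0 < ⟪L x, ‖p‖⁻¹ • p⟫ - r} := by
  have himage : L '' segment ℝ a b = segment ℝ (L a) (L b) := image_segment ℝ L.toAffineMap a b
  have hrp : r < ‖p‖ := by
    obtain ⟨q, hq, rfl⟩ := himage ▸ hp
    exact hab q hq
  intro q hq
  have := norm_le_inner_inv_norm_smul_of_isMinOn_norm (convex_segment _ _) hp hmin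
    (himage ▸ Set.mem_image_of_mem L hq)
  exact sub_pos.mpr (hrp.trans_le this)

end InnerProductSpace

section Ellipsoid

variable {c : ℝ} {E Ehalf : EuclideanSpace ℝ (Fin 3) →ₗ[ℝ] EuclideanSpace ℝ (Fin 3)}

theorem inner_self_apply_eq_norm_sq_of_diag
    (hE : ∀ x i, E x i = if i = 2 then x i / c ^ 2 else x i)
    (hEhalf : ∀ x i, Ehalf x i = if i = 2 then x i / c else x i)
    (x : EuclideanSpace ℝ (Fin 3)) : ⟪x, E x⟫ = ‖Ehalf x‖ ^ 2 := by
  rw [← real_inner_self_eq_norm_sq]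
  simp only [PiLp.inner_apply, RCLike.inner_apply, conj_trivial, Fin.sum_univ_three, hE, hEhalf]
  simp only [Fin.isValue, Fin.reduceEq, if_true, if_false]
  ring

theorem setOf_inner_self_apply_le_sq_eq_of_diag
    (hE : ∀ x i, E x i = if i = 2 then x i / c ^ 2 else x i)
    (hEhalf : ∀ x i, Ehalf x i = if i = 2 then x i / c else x i) {r : ℝ} (hr : 0 ≤ r) :
    {p | ⟪p, E p⟫ ≤ r ^ 2} = {p | ‖Ehalf p‖ ≤ r} := by
  ext p
  simp only [Set.mem_ofPred_eq, inner_self_apply_eq_norm_sq_of_diag hE hEhalf,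
    pow_le_pow_iff_left₀ (norm_nonneg _) hr two_ne_zero]

end Ellipsoid

theorem rsfc_construction_general (c : ℝ)
    (E Ehalf : EuclideanSpace ℝ (Fin 3) →ₗ[ℝ] EuclideanSpace ℝ (Fin 3))
    (hE : ∀ (x : EuclideanSpace ℝ (Fin 3)) (i : Fin 3),
      E x i = if i = 2 then x i / c ^ 2 else x i)
    (hEhalf : ∀ (x : EuclideanSpace ℝ (Fin 3)) (i : Fin 3),
      Ehalf x i = if i = 2 then x i / c else x i)
    (r : ℝ) (hr : 0 ≤ r)
    (a b : EuclideanSpace ℝ (Fin 3))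
    (hab : Disjoint (segment ℝ a b) {p : EuclideanSpace ℝ (Fin 3) | ⟪p, E p⟫ ≤ r ^ 2})
    (ptil : EuclideanSpace ℝ (Fin 3))
    (hptil : ptil ∈ segment ℝ (Ehalf a) (Ehalf b))
    (hmin : ∀ x ∈ segment ℝ (Ehalf a) (Ehalf b), ‖ptil‖ ≤ ‖x‖) :
    Convex ℝ {x : EuclideanSpace ℝ (Fin 3) | 0 < ⟪Ehalf x, ‖ptil‖⁻¹ • ptil⟫ - r} ∧
    Disjoint {x : EuclideanSpace ℝ (Fin 3) | 0 < ⟪Ehalf x, ‖ptil‖⁻¹ • ptil⟫ - r}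
      {p : EuclideanSpace ℝ (Fin 3) | ⟪p, E p⟫ ≤ r ^ 2} ∧
    segment ℝ a b ⊆ {x : EuclideanSpace ℝ (Fin 3) | 0 < ⟪Ehalf x, ‖ptil‖⁻¹ • ptil⟫ - r} := by
  rw [setOf_inner_self_apply_le_sq_eq_of_diag hE hEhalf hr] at hab ⊢
  refine ⟨convex_setOf_inner_sub_pos Ehalf _ r, ?_, ?_⟩
  · exact (disjoint_setOf_inner_sub_pos_setOf_norm_le
      (norm_inv_norm_smul_self_le_one ptil) r).preimage Ehalf
  · refine segment_subset_setOf_inner_sub_pos_of_isMinOn_norm Ehalf (fun q hq => ?_) hptil hmin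
    exact not_le.mp (Set.disjoint_left.mp hab hq)

/-- Construction of the relative safe flight corridor: if the segment `[a, b]` avoids the
ellipsoidal inter-collision model `C = {p : ⟨p, Ep⟩ ≤ r²}`, and `p̃` is a closest point to the
origin on the transformed segment `[E^{1/2}a, E^{1/2}b]` with `ñ = p̃/‖p̃‖`, then
`R = {x : ⟨E^{1/2}x, ñ⟩ - r > 0}` is convex, disjoint from `C`, and contains `[a, b]`. -/
theorem rsfc_construction (c : ℝ) (hc : 0 < c)
    (E Ehalf : EuclideanSpace ℝ (Fin 3) →ₗ[ℝ] EuclideanSpace ℝ (Fin 3))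
    (hE : ∀ (x : EuclideanSpace ℝ (Fin 3)) (i : Fin 3),
      E x i = if i = 2 then x i / c ^ 2 else x i)
    (hEhalf : ∀ (x : EuclideanSpace ℝ (Fin 3)) (i : Fin 3),
      Ehalf x i = if i = 2 then x i / c else x i)
    (r : ℝ) (hr : 0 ≤ r)
    (a b : EuclideanSpace ℝ (Fin 3))
    (hab : Disjoint (segment ℝ a b) {p : EuclideanSpace ℝ (Fin 3) | ⟪p, E p⟫ ≤ r ^ 2})
    (ptil : EuclideanSpace ℝ (Fin 3))
    (hptil : ptil ∈ segment ℝ (Ehalf a) (Ehalf b))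
    (hmin : ∀ x ∈ segment ℝ (Ehalf a) (Ehalf b), ‖ptil‖ ≤ ‖x‖) :
    Convex ℝ {x : EuclideanSpace ℝ (Fin 3) | 0 < ⟪Ehalf x, ‖ptil‖⁻¹ • ptil⟫ - r} ∧
    Disjoint {x : EuclideanSpace ℝ (Fin 3) | 0 < ⟪Ehalf x, ‖ptil‖⁻¹ • ptil⟫ - r}
      {p : EuclideanSpace ℝ (Fin 3) | ⟪p, E p⟫ ≤ r ^ 2} ∧
    segment ℝ a b ⊆ {x : EuclideanSpace ℝ (Fin 3) | 0 < ⟪Ehalf x, ‖ptil‖⁻¹ • ptil⟫ - r} :=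
  rsfc_construction_general c E Ehalf hE hEhalf r hr a b hab ptil hptil hmin
end

section
/- Let c > 0, E = diag(1, 1, 1/c²) on ℝ^3, r ≥ 0, and let R ⊆ ℝ^3 be a convex set disjoint from the ellipsoid C = {p : ⟨p, E p⟩ ≤ r²}. Let p(t) = Σ_{k=0}^{n} c_k B_{k,n}(t) and q(t) = Σ_{k=0}^{n} d_k B_{k,n}(t) be Bernstein polynomials of degree n with control points in ℝ^3 satisfying d_k − c_k ∈ R for all k = 0, …, n. Then for every t ∈ [0,1], ⟨q(t) − p(t), E (q(t) − p(t))⟩ > r²; i.e., the relative trajectory never enters the inter-collision model, so the two agents never collide. -/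
open scoped RealInnerProductSpace

/-- If `R` is convex and disjoint from the inter-collision ellipsoid
`C = {p : ⟨p, Ep⟩ ≤ r²}` and the control-point differences `d_k - c_k` of two Bernstein
polynomials all lie in `R`, then the relative trajectory never enters the inter-collision
model: `⟨q(t) - p(t), E(q(t) - p(t))⟩ > r²` for all `t ∈ [0,1]`. -/
theorem relative_trajectory_collision_free (cdw : ℝ) (hcdw : 0 < cdw)
    (E : EuclideanSpace ℝ (Fin 3) →ₗ[ℝ] EuclideanSpace ℝ (Fin 3))
    (hE : ∀ (x : EuclideanSpace ℝ (Fin 3)) (i : Fin 3),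
      E x i = if i = 2 then x i / cdw ^ 2 else x i)
    (r : ℝ) (hr : 0 ≤ r)
    (R : Set (EuclideanSpace ℝ (Fin 3))) (hconv : Convex ℝ R)
    (hdisj : Disjoint R {p : EuclideanSpace ℝ (Fin 3) | ⟪p, E p⟫ ≤ r ^ 2})
    (n : ℕ) (c d : ℕ → EuclideanSpace ℝ (Fin 3))
    (hcd : ∀ k ≤ n, d k - c k ∈ R)
    (t : ℝ) (ht : t ∈ Set.Icc (0 : ℝ) 1) :
    r ^ 2 < ⟪(∑ k ∈ Finset.range (n + 1), bernsteinBasis n k t • d k) -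
        (∑ k ∈ Finset.range (n + 1), bernsteinBasis n k t • c k),
      E ((∑ k ∈ Finset.range (n + 1), bernsteinBasis n k t • d k) -
        (∑ k ∈ Finset.range (n + 1), bernsteinBasis n k t • c k))⟫ := by
  obtain ⟨ht0, ht1⟩ := ht
  have hsum : ∑ k ∈ Finset.range (n + 1), bernsteinBasis n k t = 1 := by
    have := add_pow t (1 - t) n
    simp only [add_sub_cancel, one_pow] at this
    rw [this]
    apply Finset.sum_congr rfl
    intro k hk
    unfold bernsteinBasis
    ring
  have hnonneg : ∀ k ∈ Finset.range (n + 1), 0 ≤ bernsteinBasis n k t := by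
    intro k hk
    have h1t : 0 ≤ 1 - t := by linarith
    unfold bernsteinBasis
    positivity
  have hmem : ∀ k ∈ Finset.range (n + 1), d k - c k ∈ R := fun k hk =>
    hcd k (Nat.lt_succ_iff.mp (Finset.mem_range.mp hk))
  have hv : (∑ k ∈ Finset.range (n + 1), bernsteinBasis n k t • d k) -
      (∑ k ∈ Finset.range (n + 1), bernsteinBasis n k t • c k)
      = ∑ k ∈ Finset.range (n + 1), bernsteinBasis n k t • (d k - c k) := by
    rw [← Finset.sum_sub_distrib]
    apply Finset.sum_congr rfl
    intro k _
    rw [smul_sub]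
  rw [hv]
  set v := ∑ k ∈ Finset.range (n + 1), bernsteinBasis n k t • (d k - c k) with hvdef
  have hvR : v ∈ R := hconv.sum_mem hnonneg hsum hmem
  have hnot : v ∉ {p : EuclideanSpace ℝ (Fin 3) | ⟪p, E p⟫ ≤ r ^ 2} :=
    Set.disjoint_left.mp hdisj hvR
  simpa using lt_of_not_ge hnot
end
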